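/- Let 1 ≤ m < n and let i ≥ 1 be an integer; set r_i = i/√(n-m+i²) and r_{i+1} = (i+1)/√(n-m+(i+1)²). Let K be the truncation kernel defined below. Then ∫_{{|z| < r_i}} ∫_{{r_{i+1} ≤ |w| ≤ 1}} |K(z,w)|² dλ(w) dλ(z) = ∑_{j=0}^{m-1} P_j · Q_j, where P_j = ∑_{ℓ=j+1}^{n-m+j} binom(n-m+j, ℓ)·r_i^{2ℓ}·(1-r_i²)^{n-m+j-ℓ} and Q_j = ∑_{ℓ=0}^{j} binom(n-m+j, ℓ)·r_{i+1}^{2ℓ}·(1-r_{i+1}²)^{n-m+j-ℓ}; that is, P_j = P[Binomial(n-m+j, r_i²) > j] and Q_j = P[Binomial(n-m+j, r_{i+1}²) ≤ j]. -/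

import Mathlib

open MeasureTheory Matrix Finset

noncomputable section

instance (n : ℕ) : MeasurableSpace (Matrix (Fin n) (Fin n) ℂ) :=
  inferInstanceAs (MeasurableSpace (Fin n → Fin n → ℂ))

/-- The top-left `m × m` block of an `n × n` unitary matrix. -/
def truncation (n m : ℕ) (h : m ≤ n) (U : Matrix.unitaryGroup (Fin n) ℂ) :
    Matrix (Fin m) (Fin m) ℂ :=
  Matrix.of fun i j => (U : Matrix (Fin n) (Fin n) ℂ) (Fin.castLE h i) (Fin.castLE h j)

/-- The eigenvalues (with multiplicity) of the truncation. -/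
def eigs (n m : ℕ) (h : m ≤ n) (U : Matrix.unitaryGroup (Fin n) ℂ) : Multiset ℂ :=
  ((truncation n m h U).charpoly).roots

open Classical in
/-- The number of elements of a multiset (with multiplicity) lying in a set `A`. -/
def countIn (s : Multiset ℂ) (A : Set ℂ) : ℕ :=
  Multiset.card (s.filter fun z => z ∈ A)

/-- `r_i = i / sqrt (n - m + i²)`. -/
def rr (n m i : ℕ) : ℝ := i / Real.sqrt ((n : ℝ) - m + (i : ℝ) ^ 2)

/-- The argument of a complex number, normalized to take values in `(0, 2π]`. -/
def argIn (z : ℂ) : ℝ :=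
  if Complex.arg z ≤ 0 then Complex.arg z + 2 * Real.pi else Complex.arg z

/-- The set `A_{i,θ}`. -/
def Aiθ (n m i : ℕ) (θ : ℝ) : Set ℂ :=
  {z | ‖z‖ < rr n m i} ∪
    {z | rr n m i ≤ ‖z‖ ∧ ‖z‖ < rr n m (i + 1) ∧
      0 < argIn z ∧ argIn z < θ}

/-- The eigenvalue counting function `N_{i,θ}`. -/
def NN (n m : ℕ) (h : m ≤ n) (i : ℕ) (θ : ℝ) (U : Matrix.unitaryGroup (Fin n) ℂ) : ℕ :=
  countIn (eigs n m h U) (Aiθ n m i θ)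

/-- `ε_m = sqrt (2 log (m+1) / m)`. -/
def epsm (m : ℕ) : ℝ := Real.sqrt (2 * Real.log ((m : ℝ) + 1) / m)

/-- The normalizing constants `N_j = π (j-1)! (n-m-1)! / (n-m+j-1)!`. -/
def Nj (n m j : ℕ) : ℝ :=
  Real.pi * (Nat.factorial (j - 1)) * (Nat.factorial (n - m - 1)) /
    (Nat.factorial (n - m + j - 1))

/-- The correlation kernel of the eigenvalue process of the `m × m` truncation of an
`n × n` Haar unitary matrix. -/
def Ker (n m : ℕ) (z w : ℂ) : ℂ :=
  ∑ j ∈ Finset.Icc 1 m,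
    (1 / (Nj n m j : ℂ)) * (z * (starRingEnd ℂ) w) ^ (j - 1) *
      (((1 - ‖z‖ ^ 2) ^ (((n : ℝ) - m - 1) / 2) : ℝ) : ℂ) *
      (((1 - ‖w‖ ^ 2) ^ (((n : ℝ) - m - 1) / 2) : ℝ) : ℂ)

/-!
With `φ_j(z) = z ^ j (1 - |z|²) ^ ((n - m - 1) / 2)` the kernel is
`K(z, w) = ∑_{j < m} φ_j(z) conj (φ_j(w)) / N_{j+1}`. The monomials `z ^ j` are orthogonal on
every rotation-invariant region, so integrating `|K|²` in `w` over the annulus leaves only the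
diagonal terms: the double integral is `∑_j ‖φ_j‖²_disc ‖φ_j‖²_annulus / N_{j+1}²`. In polar
coordinates both norms are integrals of `r ^ (2j+1) (1 - r²) ^ (n-m-1)`, and after `s = r²` an
antiderivative is a binomial distribution function:
`d/ds P[Bin(n-m+j, s) ≤ j] = -(n-m) C(n-m+j, j) s ^ j (1 - s) ^ (n-m-1)`.
As `N_{j+1} = π / ((n-m) C(n-m+j, j))`, this gives
`‖φ_j‖²_annulus = N_{j+1} P[Bin(n-m+j, r_{i+1}²) ≤ j]` and `‖φ_j‖²_disc = N_{j+1} P[Bin(n-m+j, r_i²) > j]`, and the factors `N_{j+1}` cancel.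
-/

open Set Real Complex
open scoped ComplexConjugate

def binomCDF (M j : ℕ) (p : ℝ) : ℝ :=
  ∑ ℓ ∈ range (j + 1), (M.choose ℓ : ℝ) * p ^ ℓ * (1 - p) ^ (M - ℓ)

theorem hasDerivAt_binomCDF (M j : ℕ) (p : ℝ) :
    HasDerivAt (binomCDF M j)
      (-(((M - j : ℕ) : ℝ) * M.choose j * p ^ j * (1 - p) ^ (M - j - 1))) p := by
  have hq : HasDerivAt (fun p : ℝ => 1 - p) (-1) p := by
    simpa using (hasDerivAt_id p).const_sub 1
  induction j with
  | zero =>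
    have hzero : binomCDF M 0 = fun q => (1 - q) ^ M := by funext q; simp [binomCDF]
    simpa [hzero] using hq.fun_pow M
  | succ j ih =>
    have hsucc : binomCDF M (j + 1) =
        fun q => binomCDF M j q + M.choose (j + 1) * (q ^ (j + 1) * (1 - q) ^ (M - (j + 1))) := by
      funext q
      simp only [binomCDF, sum_range_succ _ (j + 1)]
      ring
    -- the terms `p ^ j (1 - p) ^ (M - j - 1)` cancel: `C(M, j + 1) (j + 1) = C(M, j) (M - j)`
    have hchoose : ((M.choose (j + 1) : ℕ) : ℝ) * (j + 1) = M.choose j * (M - j : ℕ) := by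
      exact_mod_cast Nat.choose_succ_right_eq M j
    rw [hsucc]
    refine (ih.add (((hasDerivAt_pow (j + 1) p).fun_mul (hq.fun_pow _)).const_mul _)).congr_deriv ?_
    rw [Nat.sub_sub, Nat.add_sub_cancel]
    push_cast
    linear_combination (p ^ j * (1 - p) ^ (M - (j + 1))) * hchoose

theorem binomCDF_zero (M j : ℕ) : binomCDF M j 0 = 1 := by
  simp [binomCDF, sum_range_succ']

theorem binomCDF_one {M j : ℕ} (h : j < M) : binomCDF M j 1 = 0 :=
  sum_eq_zero fun ℓ hℓ => by
    simp [zero_pow (Nat.sub_ne_zero_of_lt ((mem_range.1 hℓ).trans_le h))]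

theorem sum_Icc_choose_mul_pow_eq_one_sub_binomCDF {M j : ℕ} (h : j ≤ M) (p : ℝ) :
    ∑ ℓ ∈ Icc (j + 1) M, (M.choose ℓ : ℝ) * p ^ ℓ * (1 - p) ^ (M - ℓ) =
      1 - binomCDF M j p := by
  have htotal : ∑ ℓ ∈ range (M + 1), (M.choose ℓ : ℝ) * p ^ ℓ * (1 - p) ^ (M - ℓ) = 1 := by
    calc _ = (p + (1 - p)) ^ M := by rw [add_pow]; exact sum_congr rfl fun ℓ _ => by ring
      _ = 1 := by simp
  rw [binomCDF, eq_sub_iff_add_eq, ← Finset.Ico_add_one_right_eq_Icc, add_comm,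
    sum_range_add_sum_Ico _ (Nat.add_le_add_right h 1), htotal]

theorem integral_pow_mul_one_sub_sq_pow {N : ℕ} (hN : 0 < N) (j : ℕ) (a b : ℝ) :
    ∫ x in a..b, x ^ (2 * j + 1) * (1 - x ^ 2) ^ (N - 1) =
      (binomCDF (N + j) j (a ^ 2) - binomCDF (N + j) j (b ^ 2)) /
        (2 * N * (N + j).choose j) := by
  have hC : ((N + j).choose j : ℝ) ≠ 0 := by
    exact_mod_cast (Nat.choose_pos (Nat.le_add_left j N)).ne'
  have hF : ∀ x, HasDerivAt (fun x => -binomCDF (N + j) j (x ^ 2) / (2 * N * (N + j).choose j))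
      (x ^ (2 * j + 1) * (1 - x ^ 2) ^ (N - 1)) x := fun x => by
    refine (((hasDerivAt_binomCDF (N + j) j (x ^ 2)).comp x (hasDerivAt_pow 2 x)).neg.div_const
      _).congr_deriv ?_
    rw [Nat.add_sub_cancel]
    field_simp
    ring
  have hcont : Continuous fun x : ℝ => x ^ (2 * j + 1) * (1 - x ^ 2) ^ (N - 1) := by fun_prop
  rw [intervalIntegral.integral_eq_sub_of_hasDerivAt (fun x _ => hF x)
    (hcont.intervalIntegrable _ _)]
  ring

theorem integral_exp_int_mul_I (k : ℤ) :
    ∫ θ in Ioo (-π) π, exp (k * θ * I) = if k = 0 then ((2 * π : ℝ) : ℂ) else 0 := by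
  rw [← integral_Ioc_eq_integral_Ioo, ← intervalIntegral.integral_of_le (by linarith [pi_pos])]
  split_ifs with hk
  · simp [hk]
    ring
  · have hkI : (k : ℂ) * I ≠ 0 := mul_ne_zero (by exact_mod_cast hk) I_ne_zero
    simp_rw [mul_right_comm _ _ I]
    rw [integral_exp_mul_complex hkI]
    have hperiod : (k : ℂ) * I * (π : ℝ) = k * I * (-π : ℝ) + k * (2 * π * I) := by
      push_cast; ring
    rw [hperiod, Complex.exp_add, exp_int_mul_two_pi_mul_I, mul_one, sub_self, zero_div]

theorem setIntegral_preimage_norm_eq_polar {E : Type*} [NormedAddCommGroup E]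
    [NormedSpace ℝ E] {T : Set ℝ} (hT : MeasurableSet T) (G : ℂ → E) :
    ∫ w in norm ⁻¹' T, G w =
      ∫ x in (T ∩ Ioi 0) ×ˢ Ioo (-π) π, x.1 • G (Complex.polarCoord.symm x) := by
  have hset : (T ∩ Ioi 0) ×ˢ Ioo (-π) π = polarCoord.target ∩ Prod.fst ⁻¹' T := by
    rw [polarCoord_target]
    ext x
    simp only [mem_prod, mem_inter_iff, Set.mem_preimage]
    tauto
  rw [← integral_indicator (hT.preimage continuous_norm.measurable),
    ← Complex.integral_comp_polarCoord_symm, hset, ← setIntegral_indicator (measurable_fst hT)]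
  refine setIntegral_congr_fun polarCoord.open_target.measurableSet fun x hx => ?_
  have hnorm : ‖Complex.polarCoord.symm x‖ = x.1 := by
    rw [Complex.norm_polarCoord_symm, abs_of_pos hx.1]
  by_cases hxT : x.1 ∈ T
  · rw [indicator_of_mem (by rwa [Set.mem_preimage, hnorm]), indicator_of_mem (by exact hxT)]
  · rw [indicator_of_notMem (by rwa [Set.mem_preimage, hnorm]),
      indicator_of_notMem (by exact hxT), smul_zero]

theorem setIntegral_conj_pow_mul_pow_mul_radial {T : Set ℝ} (hT : MeasurableSet T) (p q : ℕ)
    (F : ℝ → ℝ) :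
    ∫ w in norm ⁻¹' T, conj w ^ p * w ^ q * (F ‖w‖ : ℂ) =
      if p = q then ((2 * π * ∫ r in T ∩ Ioi 0, r ^ (2 * p + 1) * F r : ℝ) : ℂ) else 0 := by
  have hpolar : ∀ x ∈ (T ∩ Ioi 0) ×ˢ Ioo (-π) π,
      x.1 • (conj (Complex.polarCoord.symm x) ^ p * Complex.polarCoord.symm x ^ q *
        (F ‖Complex.polarCoord.symm x‖ : ℂ)) =
      ((x.1 ^ (p + q + 1) * F x.1 : ℝ) : ℂ) * exp (((q : ℤ) - p : ℤ) * x.2 * I) := by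
    rintro ⟨r, θ⟩ ⟨⟨-, hr⟩, -⟩
    have hsymm : Complex.polarCoord.symm (r, θ) = r * exp (θ * I) := by
      simp [exp_mul_I]
    rw [Complex.norm_polarCoord_symm, abs_of_pos hr, hsymm, map_mul, conj_ofReal, ← exp_conj,
      map_mul, conj_ofReal, conj_I, mul_pow, mul_pow, ← Complex.exp_nat_mul,
      ← Complex.exp_nat_mul, real_smul]
    have hexp : (((q : ℤ) - p : ℤ) : ℂ) * θ * I = p * (θ * -I) + q * (θ * I) := by
      push_cast; ring
    rw [hexp, Complex.exp_add]
    push_cast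
    ring
  rw [setIntegral_preimage_norm_eq_polar hT, setIntegral_congr_fun
    ((hT.inter measurableSet_Ioi).prod measurableSet_Ioo) hpolar, Measure.volume_eq_prod,
    setIntegral_prod_mul (fun r : ℝ => ((r ^ (p + q + 1) * F r : ℝ) : ℂ))
      (fun θ : ℝ => exp (((q : ℤ) - p : ℤ) * θ * I)), integral_exp_int_mul_I,
    integral_complex_ofReal]
  by_cases hpq : p = q
  · subst hpq
    simp only [sub_self, if_true, ← two_mul]
    push_cast
    ring
  · rw [if_neg (by omega), if_neg hpq, mul_zero]

section OrthogonalKernel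

variable {ι α β : Type*} [MeasurableSpace α] [MeasurableSpace β] {μ : Measure α}
  {ν : Measure β} {s : Finset ι} {ψ : ι → β → ℂ}

theorem integral_norm_sq_sum_mul_conj_of_orthogonal
    (hψ : ∀ j ∈ s, ∀ k ∈ s, Integrable (fun w => conj (ψ j w) * ψ k w) ν)
    (horth : ∀ j ∈ s, ∀ k ∈ s, j ≠ k → ∫ w, conj (ψ j w) * ψ k w ∂ν = 0) (c : ι → ℂ) :
    ∫ w, ‖∑ j ∈ s, c j * conj (ψ j w)‖ ^ 2 ∂ν = ∑ j ∈ s, ‖c j‖ ^ 2 * ∫ w, ‖ψ j w‖ ^ 2 ∂ν := by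
  apply Complex.ofReal_injective
  have hexpand : ∀ w, ((‖∑ j ∈ s, c j * conj (ψ j w)‖ ^ 2 : ℝ) : ℂ) =
      ∑ j ∈ s, ∑ k ∈ s, c j * conj (c k) * (conj (ψ j w) * ψ k w) := fun w => by
    rw [ofReal_pow, ← mul_conj', map_sum, sum_mul_sum]
    refine sum_congr rfl fun j _ => sum_congr rfl fun k _ => ?_
    simp only [map_mul, conj_conj]
    ring
  have hdiag : ∀ j ∈ s, ∑ k ∈ s, c j * conj (c k) * ∫ w, conj (ψ j w) * ψ k w ∂ν =
      ((‖c j‖ ^ 2 * ∫ w, ‖ψ j w‖ ^ 2 ∂ν : ℝ) : ℂ) := fun j hj => by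
    rw [sum_eq_single_of_mem j hj fun k hk hkj => by rw [horth j hj k hk hkj.symm, mul_zero],
      mul_conj', ofReal_mul, ← integral_complex_ofReal]
    simp_rw [ofReal_pow, ← conj_mul']
  rw [← integral_complex_ofReal, ofReal_sum]
  simp_rw [hexpand]
  rw [integral_finsetSum _ fun j hj =>
    integrable_finsetSum _ fun k hk => (hψ j hj k hk).const_mul _]
  refine sum_congr rfl fun j hj => ?_
  rw [integral_finsetSum _ fun k hk => (hψ j hj k hk).const_mul _, ← hdiag j hj]
  simp_rw [integral_const_mul]

theorem integral_integral_norm_sq_sum_mul_conj_of_orthogonal {φ : ι → α → ℂ}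
    (hφ : ∀ j ∈ s, Integrable (fun z => ‖φ j z‖ ^ 2) μ)
    (hψ : ∀ j ∈ s, ∀ k ∈ s, Integrable (fun w => conj (ψ j w) * ψ k w) ν)
    (horth : ∀ j ∈ s, ∀ k ∈ s, j ≠ k → ∫ w, conj (ψ j w) * ψ k w ∂ν = 0) :
    ∫ z, ∫ w, ‖∑ j ∈ s, φ j z * conj (ψ j w)‖ ^ 2 ∂ν ∂μ =
      ∑ j ∈ s, (∫ z, ‖φ j z‖ ^ 2 ∂μ) * ∫ w, ‖ψ j w‖ ^ 2 ∂ν := by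
  simp_rw [integral_norm_sq_sum_mul_conj_of_orthogonal hψ horth]
  rw [integral_finsetSum _ fun j hj => (hφ j hj).mul_const _]
  simp_rw [integral_mul_const]

end OrthogonalKernel

def kerBasis (n m j : ℕ) (z : ℂ) : ℂ :=
  z ^ j * ((1 - ‖z‖ ^ 2) ^ (((n : ℝ) - m - 1) / 2) : ℝ)

section KerBasis

variable {n m : ℕ}

theorem continuous_kerBasis (hmn : m < n) (j : ℕ) : Continuous (kerBasis n m j) := by
  have hexp : 0 ≤ ((n : ℝ) - m - 1) / 2 := by
    have : (m : ℝ) + 1 ≤ n := by exact_mod_cast hmn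
    linarith
  have := Real.continuous_rpow_const hexp
  unfold kerBasis
  fun_prop

theorem conj_kerBasis_mul_kerBasis (hmn : m < n) (j k : ℕ) {z : ℂ} (hz : ‖z‖ ≤ 1) :
    conj (kerBasis n m j z) * kerBasis n m k z =
      conj z ^ j * z ^ k * (((1 - ‖z‖ ^ 2) ^ (n - m - 1) : ℝ) : ℂ) := by
  have hbase : 0 ≤ 1 - ‖z‖ ^ 2 := by nlinarith [norm_nonneg z]
  have hexp : ((n : ℝ) - m - 1) / 2 * (2 : ℕ) = (n - m - 1 : ℕ) := by
    rw [Nat.sub_sub, Nat.cast_sub hmn]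
    push_cast
    ring
  rw [← rpow_natCast, ← hexp, rpow_mul_natCast hbase, kerBasis, kerBasis, map_mul, map_pow,
    conj_ofReal]
  push_cast
  ring

theorem Ker_eq_sum_kerBasis (z w : ℂ) :
    Ker n m z w =
      ∑ j ∈ range m, ((Nj n m (j + 1))⁻¹ * kerBasis n m j z) * conj (kerBasis n m j w) := by
  rw [Ker, ← Finset.Ico_add_one_right_eq_Icc, sum_Ico_eq_sum_range, Nat.add_sub_cancel]
  refine sum_congr rfl fun j _ => ?_
  simp only [kerBasis, map_mul, map_pow, conj_ofReal, add_comm 1 j, Nat.add_sub_cancel, one_div,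
    ofReal_inv]
  ring

theorem Nj_succ (hmn : m < n) (j : ℕ) :
    Nj n m (j + 1) = π / ((n - m : ℕ) * (n - m + j).choose j) := by
  obtain ⟨N, hN⟩ : ∃ N, n - m = N + 1 := ⟨n - m - 1, by omega⟩
  have hfact : ((N + 1 + j).choose j : ℝ) * j.factorial * N.factorial * (N + 1) =
      (N + 1 + j).factorial := by
    have := Nat.choose_mul_factorial_mul_factorial (Nat.le_add_left j (N + 1))
    rw [Nat.add_sub_cancel, Nat.factorial_succ] at this
    exact_mod_cast (by rw [← this]; ring : _)
  have hC : ((N + 1 + j).choose j : ℝ) ≠ 0 := by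
    exact_mod_cast (Nat.choose_pos (Nat.le_add_left j (N + 1))).ne'
  have : ((N + 1 + j).factorial : ℝ) ≠ 0 := by positivity
  rw [Nj, hN, Nat.add_sub_cancel, show N + 1 + (j + 1) - 1 = N + 1 + j by omega,
    Nat.add_sub_cancel]
  field_simp
  rw [← hfact]
  push_cast
  ring

theorem setIntegral_conj_kerBasis_mul_kerBasis (hmn : m < n) {T : Set ℝ}
    (hT : MeasurableSet T) (hT1 : T ⊆ Iic 1) (j k : ℕ) :
    ∫ w in norm ⁻¹' T, conj (kerBasis n m j w) * kerBasis n m k w =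
      if j = k then
        ((2 * π * ∫ r in T ∩ Ioi 0, r ^ (2 * j + 1) * (1 - r ^ 2) ^ (n - m - 1) : ℝ) : ℂ)
      else 0 := by
  rw [setIntegral_congr_fun (hT.preimage continuous_norm.measurable)
    fun w hw => conj_kerBasis_mul_kerBasis hmn j k (hT1 hw)]
  exact setIntegral_conj_pow_mul_pow_mul_radial hT j k fun r => (1 - r ^ 2) ^ (n - m - 1)

theorem setIntegral_norm_sq_kerBasis (hmn : m < n) {T : Set ℝ} (hT : MeasurableSet T)
    (hT1 : T ⊆ Iic 1) (j : ℕ) :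
    ∫ w in norm ⁻¹' T, ‖kerBasis n m j w‖ ^ 2 =
      2 * π * ∫ r in T ∩ Ioi 0, r ^ (2 * j + 1) * (1 - r ^ 2) ^ (n - m - 1) := by
  apply Complex.ofReal_injective
  have h := setIntegral_conj_kerBasis_mul_kerBasis hmn hT hT1 j j
  rw [if_pos rfl] at h
  rw [← integral_complex_ofReal, ← h]
  simp_rw [conj_mul', ofReal_pow]

theorem two_pi_mul_integral_eq_Nj_mul (hmn : m < n) (j : ℕ) (a b : ℝ) :
    2 * π * ∫ r in a..b, r ^ (2 * j + 1) * (1 - r ^ 2) ^ (n - m - 1) =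
      Nj n m (j + 1) * (binomCDF (n - m + j) j (a ^ 2) - binomCDF (n - m + j) j (b ^ 2)) := by
  rw [integral_pow_mul_one_sub_sq_pow (Nat.sub_pos_of_lt hmn), Nj_succ hmn]
  field_simp

theorem setIntegral_norm_sq_kerBasis_disc (hmn : m < n) {b : ℝ} (hb : 0 ≤ b) (hb1 : b ≤ 1)
    (j : ℕ) :
    ∫ z in {z : ℂ | ‖z‖ < b}, ‖kerBasis n m j z‖ ^ 2 =
      Nj n m (j + 1) * (1 - binomCDF (n - m + j) j (b ^ 2)) := by
  have hT : Iio b ∩ Ioi 0 = Ioo 0 b := by rw [inter_comm, Ioi_inter_Iio]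
  rw [show {z : ℂ | ‖z‖ < b} = norm ⁻¹' Iio b from rfl,
    setIntegral_norm_sq_kerBasis hmn measurableSet_Iio fun r hr => (le_of_lt hr).trans hb1, hT,
    ← integral_Ioc_eq_integral_Ioo, ← intervalIntegral.integral_of_le hb,
    two_pi_mul_integral_eq_Nj_mul hmn, zero_pow two_ne_zero, binomCDF_zero]

theorem setIntegral_norm_sq_kerBasis_annulus (hmn : m < n) {a : ℝ} (ha : 0 < a) (ha1 : a ≤ 1)
    (j : ℕ) :
    ∫ w in {w : ℂ | a ≤ ‖w‖ ∧ ‖w‖ ≤ 1}, ‖kerBasis n m j w‖ ^ 2 =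
      Nj n m (j + 1) * binomCDF (n - m + j) j (a ^ 2) := by
  have hT : Icc a 1 ∩ Ioi 0 = Icc a 1 := inter_eq_left.2 fun r hr => ha.trans_le hr.1
  rw [show {w : ℂ | a ≤ ‖w‖ ∧ ‖w‖ ≤ 1} = norm ⁻¹' Icc a 1 from rfl,
    setIntegral_norm_sq_kerBasis hmn measurableSet_Icc fun r hr => hr.2, hT,
    integral_Icc_eq_integral_Ioc, ← intervalIntegral.integral_of_le ha1,
    two_pi_mul_integral_eq_Nj_mul hmn, one_pow,
    binomCDF_one (Nat.lt_add_left_iff_pos.2 (Nat.sub_pos_of_lt hmn)), sub_zero]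

theorem integral_integral_norm_sq_Ker (hmn : m < n) {a b : ℝ} (ha : 0 < a) (ha1 : a ≤ 1)
    (hb : 0 ≤ b) (hb1 : b ≤ 1) :
    ∫ z in {z : ℂ | ‖z‖ < b}, ∫ w in {w : ℂ | a ≤ ‖w‖ ∧ ‖w‖ ≤ 1}, ‖Ker n m z w‖ ^ 2 =
      ∑ j ∈ range m, (1 - binomCDF (n - m + j) j (b ^ 2)) * binomCDF (n - m + j) j (a ^ 2) := by
  have hintegrable : ∀ {E : Type} [NormedAddCommGroup E] {S : Set ℂ},
      S ⊆ Metric.closedBall 0 1 → ∀ {f : ℂ → E}, Continuous f → IntegrableOn f S :=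
    fun hS _ hf => (hf.continuousOn.integrableOn_compact (isCompact_closedBall 0 1)).mono_set hS
  have hdisc : {z : ℂ | ‖z‖ < b} ⊆ Metric.closedBall 0 1 := fun z hz => by
    simpa using hz.le.trans hb1
  have hannulus : {w : ℂ | a ≤ ‖w‖ ∧ ‖w‖ ≤ 1} ⊆ Metric.closedBall 0 1 := fun w hw => by
    simpa using hw.2
  have hbasis := continuous_kerBasis hmn
  simp_rw [Ker_eq_sum_kerBasis]
  rw [integral_integral_norm_sq_sum_mul_conj_of_orthogonal
    (fun j _ => hintegrable hdisc (by fun_prop))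
    (fun j _ k _ => hintegrable hannulus (by fun_prop)) fun j _ k _ hjk => by
      rw [show {w : ℂ | a ≤ ‖w‖ ∧ ‖w‖ ≤ 1} = norm ⁻¹' Icc a 1 from rfl,
        setIntegral_conj_kerBasis_mul_kerBasis hmn measurableSet_Icc (fun r hr => hr.2),
        if_neg hjk]]
  refine sum_congr rfl fun j _ => ?_
  have hNj : 0 < Nj n m (j + 1) := by rw [Nj]; positivity
  simp_rw [norm_mul, mul_pow, integral_const_mul, setIntegral_norm_sq_kerBasis_disc hmn hb hb1,
    setIntegral_norm_sq_kerBasis_annulus hmn ha ha1, norm_real, norm_inv,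
    Real.norm_of_nonneg hNj.le]
  field_simp

end KerBasis

theorem rr_nonneg (n m i : ℕ) : 0 ≤ rr n m i :=
  div_nonneg i.cast_nonneg (sqrt_nonneg _)

theorem rr_pos {n m i : ℕ} (hmn : m < n) (hi : 0 < i) : 0 < rr n m i := by
  have : (m : ℝ) < n := by exact_mod_cast hmn
  exact div_pos (by exact_mod_cast hi) (sqrt_pos.2 (by positivity))

theorem rr_lt_one {n m : ℕ} (hmn : m < n) (i : ℕ) : rr n m i < 1 := by
  have : (m : ℝ) < n := by exact_mod_cast hmn
  rw [rr, div_lt_one (sqrt_pos.2 (by positivity)), lt_sqrt i.cast_nonneg]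
  linarith

theorem stmt18_general (n m : ℕ) (hmn : m < n) (i : ℕ) :
    (∫ z in {z : ℂ | ‖z‖ < rr n m i},
        ∫ w in {w : ℂ | rr n m (i + 1) ≤ ‖w‖ ∧ ‖w‖ ≤ 1},
          (‖Ker n m z w‖) ^ 2 ∂volume ∂volume)
      = ∑ j ∈ Finset.range m,
          (∑ ℓ ∈ Finset.Icc (j + 1) (n - m + j),
            (Nat.choose (n - m + j) ℓ : ℝ) * rr n m i ^ (2 * ℓ) *
              (1 - rr n m i ^ 2) ^ (n - m + j - ℓ)) *
          (∑ ℓ ∈ Finset.range (j + 1),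
            (Nat.choose (n - m + j) ℓ : ℝ) * rr n m (i + 1) ^ (2 * ℓ) *
              (1 - rr n m (i + 1) ^ 2) ^ (n - m + j - ℓ)) := by
  rw [integral_integral_norm_sq_Ker hmn (rr_pos hmn i.succ_pos) (rr_lt_one hmn (i + 1)).le
    (rr_nonneg n m i) (rr_lt_one hmn i).le]
  refine sum_congr rfl fun j _ => ?_
  simp_rw [pow_mul]
  rw [sum_Icc_choose_mul_pow_eq_one_sub_binomCDF (Nat.le_add_left j _)]
  rfl

theorem stmt18 (n m : ℕ) (hm : 1 ≤ m) (hmn : m < n) (i : ℕ) (hi : 1 ≤ i) :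
    (∫ z in {z : ℂ | ‖z‖ < rr n m i},
        ∫ w in {w : ℂ | rr n m (i + 1) ≤ ‖w‖ ∧ ‖w‖ ≤ 1},
          (‖Ker n m z w‖) ^ 2 ∂volume ∂volume)
      = ∑ j ∈ Finset.range m,
          (∑ ℓ ∈ Finset.Icc (j + 1) (n - m + j),
            (Nat.choose (n - m + j) ℓ : ℝ) * rr n m i ^ (2 * ℓ) *
              (1 - rr n m i ^ 2) ^ (n - m + j - ℓ)) *
          (∑ ℓ ∈ Finset.range (j + 1),
            (Nat.choose (n - m + j) ℓ : ℝ) * rr n m (i + 1) ^ (2 * ℓ) *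
              (1 - rr n m (i + 1) ^ 2) ^ (n - m + j - ℓ)) :=
  stmt18_general n m hmn i
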